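/- Let W be a real subspace of the skew-Hermitian N×N matrices that is invariant under conjugation by every φ(g) and whose complex span W_ℂ has no conjugation-invariant complex subspaces other than 0 and W_ℂ; let {u_1,…,u_w} be a Frobenius-orthonormal basis of W. Let H be a skew-Hermitian matrix with [H,X] ∈ W for every X ∈ W, let O be a Hermitian matrix with iO ∈ W, and let ρ be a density matrix. Then ∫_G ∫_G ( Tr(φ(g⁻) ρ φ(g⁻)⁻¹ · [H, φ(g⁺) O φ(g⁺)⁻¹]) )² dμ(g⁺) dμ(g⁻) = Tr(O²) · ( Σ_{j,k=1}^w (Tr([H,u_k] u_j))² ) · ( Σ_{j=1}^w (Tr((iρ) u_j))² ) / w². -/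

import Mathlib

/-!
Let `a(g), b(g) ∈ ℝ^w` be the coordinates, in the basis `u`, of `φ(g) (iρ) φ(g)⁻¹` and
`φ(g) (iO) φ(g)⁻¹`. Since `[H, ·]` preserves `W`, the integrand is the bilinear expression
`b(g⁺) · L a(g⁻)` with `L_{jk} = ⟨[H, u_j], u_k⟩`. By left invariance of the Haar measure, the
second-moment matrix `∫ a aᵀ dμ` commutes with the orthogonal matrices through which `G` acts on
`W`; complexifying, Schur's lemma for the irreducible `W_ℂ` makes it a scalar, and its trace
`|a|²` (constant along the orbit) fixes the scalar to `|a|² / w`. The double integral then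
collapses to `(|a|² / w) (|b|² / w) ∑ L_{jk}²`, and `|b|² = Tr(O²)` because `iO ∈ W`.
-/

open MeasureTheory Matrix
open scoped ComplexOrder

noncomputable section

namespace ConjugationVariance

section SecondMoment

variable {ι α : Type*} [Fintype ι] [MeasurableSpace α] {μ : Measure α} {c : α → ι → ℝ}

def secondMoment (μ : Measure α) (c : α → ι → ℝ) : Matrix ι ι ℝ :=
  Matrix.of fun a b => ∫ x, c x a * c x b ∂μ

theorem dotProduct_mul_dotProduct (v w x : ι → ℝ) :
    (v ⬝ᵥ x) * (w ⬝ᵥ x) = ∑ a, ∑ b, v a * w b * (x a * x b) := by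
  simp only [dotProduct, Finset.sum_mul_sum]
  exact Finset.sum_congr rfl fun a _ => Finset.sum_congr rfl fun b _ => by ring

variable (hc : ∀ a b, Integrable (fun x => c x a * c x b) μ)
include hc

theorem integrable_dotProduct_mul_dotProduct (v w : ι → ℝ) :
    Integrable (fun x => (v ⬝ᵥ c x) * (w ⬝ᵥ c x)) μ := by
  simp only [dotProduct_mul_dotProduct]
  exact integrable_finsetSum _ fun a _ => integrable_finsetSum _ fun b _ => (hc a b).const_mul _

theorem integral_dotProduct_mul_dotProduct (v w : ι → ℝ) :
    ∫ x, (v ⬝ᵥ c x) * (w ⬝ᵥ c x) ∂μ = v ⬝ᵥ (secondMoment μ c *ᵥ w) := by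
  simp only [dotProduct_mul_dotProduct]
  rw [integral_finsetSum _ fun a _ => integrable_finsetSum _ fun b _ => (hc a b).const_mul _]
  simp only [integral_finsetSum _ fun b _ => (hc _ b).const_mul _, integral_const_mul]
  simp only [secondMoment, dotProduct, mulVec, of_apply, Finset.mul_sum]
  exact Finset.sum_congr rfl fun a _ => Finset.sum_congr rfl fun b _ => by ring

theorem secondMoment_mulVec (R : Matrix ι ι ℝ) :
    secondMoment μ (fun x => R *ᵥ c x) = R * secondMoment μ c * Rᵀ := by
  ext a b
  rw [secondMoment, of_apply, mul_mul_apply, transpose_transpose]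
  exact integral_dotProduct_mul_dotProduct hc (R a) (R b)

variable [DecidableEq ι]

theorem integral_sq_dotProduct {A : ℝ} (hA : secondMoment μ c = A • 1) (v : ι → ℝ) :
    ∫ x, (v ⬝ᵥ c x) ^ 2 ∂μ = A * (v ⬝ᵥ v) := by
  simp only [sq, integral_dotProduct_mul_dotProduct hc, hA, smul_mulVec, one_mulVec,
    dotProduct_smul, smul_eq_mul]

theorem integral_integral_sq_dotProduct_mulVec {β κ : Type*} [MeasurableSpace β] {ν : Measure β}
    [Fintype κ] [DecidableEq κ] {d : β → κ → ℝ} (hd : ∀ a b, Integrable (fun y => d y a * d y b) ν)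
    {A B : ℝ} (hA : secondMoment μ c = A • 1) (hB : secondMoment ν d = B • 1) (L : Matrix κ ι ℝ) :
    ∫ x, ∫ y, (d y ⬝ᵥ (L *ᵥ c x)) ^ 2 ∂ν ∂μ = A * B * ∑ k, ∑ i, L k i ^ 2 := by
  have hinner (x : α) : ∫ y, (d y ⬝ᵥ (L *ᵥ c x)) ^ 2 ∂ν = B * ∑ k, (L k ⬝ᵥ c x) ^ 2 := by
    simp_rw [dotProduct_comm (d _), integral_sq_dotProduct hd hB, dotProduct, sq]
    rfl
  have hsq (k : κ) : Integrable (fun x => (L k ⬝ᵥ c x) ^ 2) μ := by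
    simpa only [sq] using integrable_dotProduct_mul_dotProduct hc (L k) (L k)
  simp_rw [hinner, integral_const_mul, integral_finsetSum _ fun k _ => hsq k,
    integral_sq_dotProduct hc hA, dotProduct, ← Finset.mul_sum, sq]
  ring

end SecondMoment

section Invariance

variable {ι G : Type*} [Group G] [MeasurableSpace G] [MeasurableMul G] {μ : Measure G}
  [μ.IsMulLeftInvariant]

theorem secondMoment_comp_mul_left (c : G → ι → ℝ) (h : G) :
    secondMoment μ (fun g => c (h * g)) = secondMoment μ c := by
  ext a b
  exact integral_mul_left_eq_self (fun g => c g a * c g b) h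

theorem commute_secondMoment [Fintype ι] [DecidableEq ι] {c : G → ι → ℝ}
    (hc : ∀ a b, Integrable (fun x => c x a * c x b) μ) {R : Matrix ι ι ℝ} (hR : Rᵀ * R = 1)
    {h : G} (hcR : ∀ g, c (h * g) = R *ᵥ c g) : Commute (secondMoment μ c) R := by
  have hM : secondMoment μ c = R * secondMoment μ c * Rᵀ := by
    conv_lhs => rw [← secondMoment_comp_mul_left c h]
    simp only [hcR]
    exact secondMoment_mulVec hc R
  calc secondMoment μ c * R = R * secondMoment μ c * (Rᵀ * R) := by
        conv_lhs => rw [hM]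
        simp only [Matrix.mul_assoc]
    _ = R * secondMoment μ c := by rw [hR, Matrix.mul_one]

end Invariance

theorem exists_eq_smul_of_forall_commute {K V G : Type*} [Field K] [IsAlgClosed K]
    [AddCommGroup V] [Module K V] [FiniteDimensional K V] [Nontrivial V]
    {ρ : G → Module.End K V} (hirr : ∀ S : Submodule K V, (∀ g, ∀ x ∈ S, ρ g x ∈ S) → S = ⊥ ∨ S = ⊤)
    {T : Module.End K V} (hT : ∀ g, Commute T (ρ g)) : ∃ c : K, T = c • 1 := by
  obtain ⟨c, hc⟩ := T.exists_eigenvalue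
  have htop : T.eigenspace c = ⊤ :=
    (hirr _ fun g => Module.End.mapsTo_genEigenspace_of_comm (hT g) c 1).resolve_left hc
  refine ⟨c, LinearMap.ext fun x => ?_⟩
  exact Module.End.mem_eigenspace_iff.mp (htop ▸ Submodule.mem_top)

section TraceForm

variable {n ι : Type*} [Fintype n]

/-- The real part makes this an `ℝ`-bilinear form on all matrices; on skew-Hermitian ones it is
the Frobenius inner product `⟨A, B⟩ = -Tr(AB)`. -/
def traceForm : LinearMap.BilinForm ℝ (Matrix n n ℂ) :=
  LinearMap.mk₂ ℝ (fun x y => -(x * y).trace.re)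
    (fun x x' y => by simp [add_mul]; ring) (fun c x y => by simp)
    (fun x y y' => by simp [mul_add]; ring) (fun c x y => by simp)

theorem traceForm_apply (x y : Matrix n n ℂ) : traceForm x y = -(x * y).trace.re := rfl

theorem traceForm_comm (x y : Matrix n n ℂ) : traceForm x y = traceForm y x := by
  rw [traceForm_apply, traceForm_apply, trace_mul_comm]

theorem traceForm_I_smul (x y : Matrix n n ℂ) :
    traceForm (Complex.I • x) (Complex.I • y) = (x * y).trace.re := by
  simp [traceForm_apply]

def coords (u : ι → Matrix n n ℂ) : Matrix n n ℂ →ₗ[ℝ] ι → ℝ :=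
  LinearMap.pi fun k => traceForm.flip (u k)

theorem coords_apply (u : ι → Matrix n n ℂ) (x : Matrix n n ℂ) (k : ι) :
    coords u x k = traceForm x (u k) := rfl

structure IsTraceOrthonormalBasis [DecidableEq ι] (W : Submodule ℝ (Matrix n n ℂ))
    (u : ι → Matrix n n ℂ) : Prop where
  span_range : Submodule.span ℝ (Set.range u) = W
  trace_mul : ∀ j k, (u j * u k).trace = if j = k then -1 else 0

namespace IsTraceOrthonormalBasis

variable [Fintype ι] [DecidableEq ι] {W : Submodule ℝ (Matrix n n ℂ)} {u : ι → Matrix n n ℂ}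
  (hu : IsTraceOrthonormalBasis W u)
include hu

omit [Fintype ι] in
theorem mem (j : ι) : u j ∈ W := hu.span_range ▸ Submodule.subset_span ⟨j, rfl⟩

omit [Fintype ι] in
theorem coords_basis (j : ι) : coords u (u j) = Pi.single j 1 := by
  ext k
  rw [coords_apply, traceForm_apply, hu.trace_mul, Pi.single_apply]
  split_ifs <;> simp_all [eq_comm]

theorem sum_coords_smul {x : Matrix n n ℂ} (hx : x ∈ W) : ∑ k, coords u x k • u k = x := by
  have key : Set.EqOn (Fintype.linearCombination ℝ u ∘ₗ coords u)
      (LinearMap.id : Matrix n n ℂ →ₗ[ℝ] Matrix n n ℂ) (Set.range u) := by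
    rintro _ ⟨j, rfl⟩
    simp [hu.coords_basis, Fintype.linearCombination_apply, Pi.single_apply]
  simpa [Fintype.linearCombination_apply] using LinearMap.eqOn_span key (hu.span_range ▸ hx)

theorem traceForm_eq_dotProduct {x : Matrix n n ℂ} (hx : x ∈ W) (y : Matrix n n ℂ) :
    traceForm y x = coords u x ⬝ᵥ coords u y := by
  conv_lhs => rw [← hu.sum_coords_smul hx]
  simp [map_sum, dotProduct, coords_apply]

theorem coords_map_eq_vecMul (D : Matrix n n ℂ →ₗ[ℝ] Matrix n n ℂ) {y : Matrix n n ℂ}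
    (hy : y ∈ W) : coords u (D y) = coords u y ᵥ* Matrix.of fun j k => coords u (D (u j)) k := by
  conv_lhs => rw [← hu.sum_coords_smul hy]
  ext k
  simp [vecMul, dotProduct]

theorem linearIndependent : LinearIndependent ℂ u := by
  refine Fintype.linearIndependent_iff.mpr fun c hc j => ?_
  have := congrArg (fun x => (x * u j).trace) hc
  simpa [Finset.sum_mul, trace_sum, hu.trace_mul] using this

end IsTraceOrthonormalBasis

end TraceForm

section Conjugation

variable {n G : Type*} [Fintype n] [DecidableEq n] [Group G]

def conjAction (φ : G →* unitaryGroup n ℂ) : G →* (Matrix n n ℂ ≃⋆ₐ[ℂ] Matrix n n ℂ) :=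
  (Unitary.conjStarAlgAut ℂ (Matrix n n ℂ)).comp φ

def IsIrreducibleComplexSpan (φ : G →* unitaryGroup n ℂ) (W : Submodule ℝ (Matrix n n ℂ)) :
    Prop :=
  ∀ W' : Submodule ℂ (Matrix n n ℂ), W' ≤ Submodule.span ℂ (W : Set (Matrix n n ℂ)) →
    (∀ g, ∀ x ∈ W', conjAction φ g x ∈ W') → W' = ⊥ ∨ W' = Submodule.span ℂ (W : Set _)

variable (φ : G →* unitaryGroup n ℂ)

theorem conjAction_apply (g : G) (x : Matrix n n ℂ) :
    conjAction φ g x = φ g * x * (φ g⁻¹ : Matrix n n ℂ) := by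
  simp [conjAction]

theorem trace_conjAction (g : G) (x : Matrix n n ℂ) : (conjAction φ g x).trace = x.trace := by
  rw [conjAction, MonoidHom.comp_apply, Unitary.conjStarAlgAut_apply, trace_mul_cycle,
    Unitary.coe_star_mul_self, one_mul]

theorem traceForm_conjAction (g : G) (x y : Matrix n n ℂ) :
    traceForm (conjAction φ g x) (conjAction φ g y) = traceForm x y := by
  rw [traceForm_apply, ← map_mul, trace_conjAction, traceForm_apply]

theorem traceForm_conjAction_left (g : G) (x y : Matrix n n ℂ) :
    traceForm (conjAction φ g x) y = traceForm x (conjAction φ g⁻¹ y) := by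
  rw [← traceForm_conjAction φ g⁻¹, ← StarAlgEquiv.mul_apply, ← map_mul, inv_mul_cancel, map_one]
  rfl

theorem continuous_coords_conjAction [TopologicalSpace G] [IsTopologicalGroup G]
    (hcont : Continuous fun g => (φ g : Matrix n n ℂ)) {ι : Type*} (u : ι → Matrix n n ℂ)
    (v : Matrix n n ℂ) : Continuous fun g => coords u (conjAction φ g v) := by
  simp only [conjAction_apply]
  exact (coords u).continuous_of_finiteDimensional.comp
    ((hcont.matrix_mul continuous_const).matrix_mul (hcont.comp continuous_inv))

variable {ι : Type*} [Fintype ι] [DecidableEq ι]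

def repMatrix (u : ι → Matrix n n ℂ) (g : G) : Matrix ι ι ℝ :=
  Matrix.of fun j m => traceForm (conjAction φ g (u m)) (u j)

def adMatrix (u : ι → Matrix n n ℂ) (H : Matrix n n ℂ) : Matrix ι ι ℝ :=
  Matrix.of fun j k => traceForm ⁅H, u j⁆ (u k)

variable {φ} {W : Submodule ℝ (Matrix n n ℂ)} {u : ι → Matrix n n ℂ}
  (hu : IsTraceOrthonormalBasis W u) (hWinv : ∀ g, ∀ x ∈ W, conjAction φ g x ∈ W)
include hu hWinv

theorem coords_conjAction (g : G) (x : Matrix n n ℂ) :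
    coords u (conjAction φ g x) = repMatrix φ u g *ᵥ coords u x := by
  ext j
  rw [coords_apply, traceForm_conjAction_left,
    hu.traceForm_eq_dotProduct (hWinv _ _ (hu.mem j))]
  refine Finset.sum_congr rfl fun m _ => ?_
  rw [coords_apply, traceForm_comm, ← traceForm_conjAction_left]
  simp only [repMatrix, of_apply]

theorem repMatrix_transpose_mul_self (g : G) : (repMatrix φ u g)ᵀ * repMatrix φ u g = 1 := by
  ext m m'
  calc ((repMatrix φ u g)ᵀ * repMatrix φ u g) m m'
      = coords u (conjAction φ g (u m)) ⬝ᵥ coords u (conjAction φ g (u m')) := rfl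
    _ = traceForm (conjAction φ g (u m')) (conjAction φ g (u m)) :=
      (hu.traceForm_eq_dotProduct (hWinv g _ (hu.mem m)) _).symm
    _ = (1 : Matrix ι ι ℝ) m m' := by
      rw [traceForm_conjAction, ← coords_apply, hu.coords_basis, Pi.single_apply, one_apply]

theorem dotProduct_coords_conjAction (g : G) (x : Matrix n n ℂ) :
    coords u (conjAction φ g x) ⬝ᵥ coords u (conjAction φ g x) = coords u x ⬝ᵥ coords u x := by
  rw [coords_conjAction hu hWinv, dotProduct_mulVec, ← mulVec_transpose, mulVec_mulVec,
    repMatrix_transpose_mul_self hu hWinv, one_mulVec]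

theorem conjAction_sum_smul (g : G) (c : ι → ℂ) :
    conjAction φ g (∑ k, c k • u k) = ∑ k, ((repMatrix φ u g).map (↑) *ᵥ c) k • u k := by
  have hbasis (m : ι) : conjAction φ g (u m) = ∑ k, (repMatrix φ u g k m : ℂ) • u k := by
    simp only [Complex.coe_smul]
    exact (hu.sum_coords_smul (hWinv g _ (hu.mem m))).symm
  simp only [map_sum, map_smul, hbasis, Finset.smul_sum, smul_smul]
  rw [Finset.sum_comm]
  simp only [mulVec, dotProduct, map_apply, Finset.sum_smul, mul_comm]

theorem eq_bot_or_eq_top_of_forall_mulVec_mem (hirr : IsIrreducibleComplexSpan φ W)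
    (S : Submodule ℂ (ι → ℂ)) (hS : ∀ g, ∀ c ∈ S, (repMatrix φ u g).map (↑) *ᵥ c ∈ S) :
    S = ⊥ ∨ S = ⊤ := by
  set L := Fintype.linearCombination ℂ u
  have hL : Function.Injective L := hu.linearIndependent.fintypeLinearCombination_injective
  have hrange : LinearMap.range L = Submodule.span ℂ (W : Set (Matrix n n ℂ)) := by
    rw [Fintype.range_linearCombination, ← hu.span_range, Submodule.span_span_of_tower]
  have hinv : ∀ g, ∀ x ∈ S.map L, conjAction φ g x ∈ S.map L := by
    rintro g _ ⟨c, hc, rfl⟩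
    exact ⟨_, hS g c hc, by simp [L, Fintype.linearCombination_apply, conjAction_sum_smul hu hWinv]⟩
  refine (hirr _ (hrange ▸ LinearMap.map_le_range) hinv).imp (fun h => ?_) (fun h => ?_)
  · exact Submodule.map_injective_of_injective hL (h.trans (Submodule.map_bot L).symm)
  · exact Submodule.map_injective_of_injective hL
      (h.trans (hrange.symm.trans (Submodule.map_top L).symm))

theorem exists_eq_smul_one_of_commute [Nonempty ι] (hirr : IsIrreducibleComplexSpan φ W)
    {M : Matrix ι ι ℝ} (hM : ∀ g, Commute M (repMatrix φ u g)) : ∃ t : ℝ, M = t • 1 := by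
  let complexify : Matrix ι ι ℝ →ₐ[ℝ] Module.End ℂ (ι → ℂ) :=
    (Matrix.toLinAlgEquiv'.toAlgHom.restrictScalars ℝ).comp Complex.ofRealAm.mapMatrix
  obtain ⟨c, hc⟩ := exists_eq_smul_of_forall_commute (ρ := fun g => complexify (repMatrix φ u g))
    (fun S hS => eq_bot_or_eq_top_of_forall_mulVec_mem hu hWinv hirr S fun g x hx => by
      simpa [complexify] using hS g x hx)
    (T := complexify M) fun g => (hM g).map complexify
  have hMc : M.map ((↑) : ℝ → ℂ) = c • 1 :=
    Matrix.toLin'.injective (by rw [map_smul, Matrix.toLin'_one]; exact hc)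
  refine ⟨c.re, Matrix.ext fun a b => ?_⟩
  have hab := congr_fun₂ hMc a b
  rcases eq_or_ne a b with rfl | h
  · have haa : (M a a : ℂ) = c := by simpa using hab
    simp [← haa]
  · have hab' : (M a b : ℂ) = 0 := by simpa [h] using hab
    simpa [h] using hab'

theorem re_trace_mul_lie_conjAction {H : Matrix n n ℂ} (hHW : ∀ X ∈ W, ⁅H, X⁆ ∈ W)
    {O : Matrix n n ℂ} (hO : Complex.I • O ∈ W) (ρ : Matrix n n ℂ) (gm gp : G) :
    (trace ((φ gm : Matrix n n ℂ) * ρ * (φ gm⁻¹ : Matrix n n ℂ) *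
        ⁅H, (φ gp : Matrix n n ℂ) * O * (φ gp⁻¹ : Matrix n n ℂ)⁆)).re =
      coords u (conjAction φ gp (Complex.I • O)) ⬝ᵥ
        (adMatrix u H *ᵥ coords u (conjAction φ gm (Complex.I • ρ))) := by
  set y := conjAction φ gp (Complex.I • O)
  have hy : y ∈ W := hWinv gp _ hO
  have hlie : ⁅H, y⁆ = (LinearMap.mulLeft ℝ H - LinearMap.mulRight ℝ H) y := by
    simp [Ring.lie_def]
  have htrace : (trace ((φ gm : Matrix n n ℂ) * ρ * (φ gm⁻¹ : Matrix n n ℂ) *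
        ⁅H, (φ gp : Matrix n n ℂ) * O * (φ gp⁻¹ : Matrix n n ℂ)⁆)).re =
      traceForm (conjAction φ gm (Complex.I • ρ)) ⁅H, y⁆ := by
    simp only [y, map_smul, conjAction_apply, Ring.lie_def, mul_smul_comm, smul_mul_assoc,
      ← smul_sub, traceForm_I_smul]
  rw [htrace, hu.traceForm_eq_dotProduct (hHW y hy), hlie, hu.coords_map_eq_vecMul _ hy,
    ← dotProduct_mulVec]
  rfl

end Conjugation

section Haar

variable {n ι G : Type*} [Fintype n] [DecidableEq n] [Fintype ι] [DecidableEq ι] [Group G]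
  [TopologicalSpace G] [IsTopologicalGroup G] [CompactSpace G] [MeasurableSpace G]
  [BorelSpace G] (μ : Measure G) [μ.IsHaarMeasure] {φ : G →* unitaryGroup n ℂ}
  (hcont : Continuous fun g => (φ g : Matrix n n ℂ))
include hcont

omit [Fintype ι] [DecidableEq ι] in
theorem integrable_coords_conjAction_mul (u : ι → Matrix n n ℂ) (v : Matrix n n ℂ) (a b : ι) :
    Integrable (fun g => coords u (conjAction φ g v) a * coords u (conjAction φ g v) b) μ :=
  have hv := continuous_coords_conjAction _ hcont u v
  ((continuous_apply a).comp hv).mul ((continuous_apply b).comp hv)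
    |>.integrable_of_hasCompactSupport (.of_compactSpace _)

variable {W : Submodule ℝ (Matrix n n ℂ)} {u : ι → Matrix n n ℂ}
  (hu : IsTraceOrthonormalBasis W u) (hWinv : ∀ g, ∀ x ∈ W, conjAction φ g x ∈ W)
include hu hWinv

theorem commute_secondMoment_repMatrix (v : Matrix n n ℂ) (h : G) :
    Commute (secondMoment μ fun g => coords u (conjAction φ g v)) (repMatrix φ u h) :=
  commute_secondMoment (integrable_coords_conjAction_mul μ hcont u v)
    (repMatrix_transpose_mul_self hu hWinv h) fun g => by
      rw [map_mul, StarAlgEquiv.mul_apply, coords_conjAction hu hWinv]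

theorem secondMoment_coords_conjAction [IsProbabilityMeasure μ]
    (hirr : IsIrreducibleComplexSpan φ W) (v : Matrix n n ℂ) :
    secondMoment μ (fun g => coords u (conjAction φ g v)) =
      ((coords u v ⬝ᵥ coords u v) / Fintype.card ι) • 1 := by
  rcases isEmpty_or_nonempty ι with hι | hι
  · exact Subsingleton.elim _ _
  obtain ⟨t, ht⟩ := exists_eq_smul_one_of_commute hu hWinv hirr
    (commute_secondMoment_repMatrix μ hcont hu hWinv v)
  have htrace : t * Fintype.card ι = coords u v ⬝ᵥ coords u v := by
    calc t * Fintype.card ι = (secondMoment μ fun g => coords u (conjAction φ g v)).trace := by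
          simp [ht]
      _ = ∫ g, coords u (conjAction φ g v) ⬝ᵥ coords u (conjAction φ g v) ∂μ := by
          simp only [dotProduct]
          rw [integral_finsetSum _ fun a _ => integrable_coords_conjAction_mul μ hcont u v a a]
          rfl
      _ = coords u v ⬝ᵥ coords u v := by
          simp [dotProduct_coords_conjAction hu hWinv]
  rw [ht, ← htrace, mul_div_cancel_right₀ _ (Nat.cast_ne_zero.mpr Fintype.card_ne_zero)]

end Haar

end ConjugationVariance

end

open ConjugationVariance

theorem stmt_9_general
    {G : Type} [Group G] [TopologicalSpace G] [IsTopologicalGroup G] [CompactSpace G]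
    [MeasurableSpace G] [BorelSpace G]
    (μ : Measure G) [μ.IsHaarMeasure] [IsProbabilityMeasure μ]
    {N w : ℕ}
    (φ : G →* Matrix.unitaryGroup (Fin N) ℂ)
    (hcont : Continuous fun g => (φ g : Matrix (Fin N) (Fin N) ℂ))
    (W : Submodule ℝ (Matrix (Fin N) (Fin N) ℂ))
    (hWinv : ∀ g : G, ∀ X ∈ W,
      (φ g : Matrix (Fin N) (Fin N) ℂ) * X * (φ g⁻¹ : Matrix (Fin N) (Fin N) ℂ) ∈ W)
    (hWirr : ∀ W' : Submodule ℂ (Matrix (Fin N) (Fin N) ℂ),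
      W' ≤ Submodule.span ℂ (W : Set (Matrix (Fin N) (Fin N) ℂ)) →
      (∀ g : G, ∀ X ∈ W',
        (φ g : Matrix (Fin N) (Fin N) ℂ) * X * (φ g⁻¹ : Matrix (Fin N) (Fin N) ℂ) ∈ W') →
      W' = ⊥ ∨ W' = Submodule.span ℂ (W : Set (Matrix (Fin N) (Fin N) ℂ)))
    (u : Fin w → Matrix (Fin N) (Fin N) ℂ)
    (huspan : Submodule.span ℝ (Set.range u) = W)
    (huorth : ∀ j k, Matrix.trace (u j * u k) = if j = k then (-1 : ℂ) else 0)
    (H : Matrix (Fin N) (Fin N) ℂ)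
    (hHW : ∀ X ∈ W, ⁅H, X⁆ ∈ W)
    (O : Matrix (Fin N) (Fin N) ℂ) (hiO : Complex.I • O ∈ W)
    (ρ : Matrix (Fin N) (Fin N) ℂ) :
    (∫ gm, ∫ gp,
        ((Matrix.trace ((φ gm : Matrix (Fin N) (Fin N) ℂ) * ρ *
            (φ gm⁻¹ : Matrix (Fin N) (Fin N) ℂ) *
          ⁅H, (φ gp : Matrix (Fin N) (Fin N) ℂ) * O *
            (φ gp⁻¹ : Matrix (Fin N) (Fin N) ℂ)⁆)).re) ^ 2 ∂μ ∂μ)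
      = (Matrix.trace (O * O)).re *
          (∑ j, ∑ k, ((Matrix.trace (⁅H, u k⁆ * u j)).re) ^ 2) *
          (∑ j, ((Matrix.trace ((Complex.I • ρ) * u j)).re) ^ 2) / (w : ℝ) ^ 2 := by
  have hu : IsTraceOrthonormalBasis W u := ⟨huspan, huorth⟩
  have hWinv' : ∀ g, ∀ x ∈ W, conjAction φ g x ∈ W := by
    simpa only [conjAction_apply] using hWinv
  have hirr : IsIrreducibleComplexSpan φ W := by
    simpa only [IsIrreducibleComplexSpan, conjAction_apply] using hWirr
  have hmoment := secondMoment_coords_conjAction μ hcont hu hWinv' hirr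
  simp_rw [re_trace_mul_lie_conjAction hu hWinv' hHW hiO ρ]
  rw [integral_integral_sq_dotProduct_mulVec (integrable_coords_conjAction_mul μ hcont u _)
    (integrable_coords_conjAction_mul μ hcont u _) (hmoment _) (hmoment _),
    ← hu.traceForm_eq_dotProduct hiO, traceForm_I_smul]
  have hsq (x y : Matrix (Fin N) (Fin N) ℂ) : traceForm x y ^ 2 = (x * y).trace.re ^ 2 := by
    rw [traceForm_apply, neg_sq]
  simp only [adMatrix, of_apply, dotProduct, coords_apply, ← sq, hsq, Fintype.card_fin]
  rw [Finset.sum_comm (γ := Fin w)]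
  ring

/-- variance on a single irreducible component. Let `W` be a
conjugation-invariant real subspace of the skew-Hermitian matrices with irreducible
complex span, spanned by the Frobenius-orthonormal family `{u_j}`. For skew-Hermitian `H`
with `[H, W] ⊆ W`, Hermitian `O` with `iO ∈ W`, and a density matrix `ρ`:
`∫∫ (Tr(φ(g⁻)ρφ(g⁻)⁻¹ [H, φ(g⁺)Oφ(g⁺)⁻¹]))² dμ dμ
  = Tr(O²)·(∑_{j,k} Tr([H,u_k]u_j)²)·(∑_j Tr((iρ)u_j)²)/w²`. -/
theorem stmt_9
    {G : Type} [Group G] [TopologicalSpace G] [IsTopologicalGroup G] [CompactSpace G]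
    [MeasurableSpace G] [BorelSpace G]
    (μ : Measure G) [μ.IsHaarMeasure] [IsProbabilityMeasure μ]
    {N w : ℕ} (hN : 1 ≤ N) (hw : 1 ≤ w)
    (φ : G →* Matrix.unitaryGroup (Fin N) ℂ)
    (hcont : Continuous fun g => (φ g : Matrix (Fin N) (Fin N) ℂ))
    (W : Submodule ℝ (Matrix (Fin N) (Fin N) ℂ))
    (hWskew : ∀ X ∈ W, Xᴴ = -X)
    (hWinv : ∀ g : G, ∀ X ∈ W,
      (φ g : Matrix (Fin N) (Fin N) ℂ) * X * (φ g⁻¹ : Matrix (Fin N) (Fin N) ℂ) ∈ W)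
    (hWirr : ∀ W' : Submodule ℂ (Matrix (Fin N) (Fin N) ℂ),
      W' ≤ Submodule.span ℂ (W : Set (Matrix (Fin N) (Fin N) ℂ)) →
      (∀ g : G, ∀ X ∈ W',
        (φ g : Matrix (Fin N) (Fin N) ℂ) * X * (φ g⁻¹ : Matrix (Fin N) (Fin N) ℂ) ∈ W') →
      W' = ⊥ ∨ W' = Submodule.span ℂ (W : Set (Matrix (Fin N) (Fin N) ℂ)))
    (u : Fin w → Matrix (Fin N) (Fin N) ℂ) (hu : ∀ j, u j ∈ W)
    (huspan : Submodule.span ℝ (Set.range u) = W)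
    (huorth : ∀ j k, Matrix.trace (u j * u k) = if j = k then (-1 : ℂ) else 0)
    (H : Matrix (Fin N) (Fin N) ℂ) (hHskew : Hᴴ = -H)
    (hHW : ∀ X ∈ W, ⁅H, X⁆ ∈ W)
    (O : Matrix (Fin N) (Fin N) ℂ) (hO : Oᴴ = O) (hiO : Complex.I • O ∈ W)
    (ρ : Matrix (Fin N) (Fin N) ℂ) (hρ : ρ.PosSemidef) (hρtr : ρ.trace = 1) :
    (∫ gm, ∫ gp,
        ((Matrix.trace ((φ gm : Matrix (Fin N) (Fin N) ℂ) * ρ *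
            (φ gm⁻¹ : Matrix (Fin N) (Fin N) ℂ) *
          ⁅H, (φ gp : Matrix (Fin N) (Fin N) ℂ) * O *
            (φ gp⁻¹ : Matrix (Fin N) (Fin N) ℂ)⁆)).re) ^ 2 ∂μ ∂μ)
      = (Matrix.trace (O * O)).re *
          (∑ j, ∑ k, ((Matrix.trace (⁅H, u k⁆ * u j)).re) ^ 2) *
          (∑ j, ((Matrix.trace ((Complex.I • ρ) * u j)).re) ^ 2) / (w : ℝ) ^ 2 :=
  stmt_9_general μ φ hcont W hWinv hWirr u huspan huorth H hHW O hiO ρ
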